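/- arXiv:1806.03135 — 4 statements merged into one kernel-verified Lean document; each statement's English description precedes it below -/
import Mathlib

section
/- Let D be a nonnegative integer and let 0 < s < 2 be a real number. Let a be a nonzero finitely supported real sequence whose moments of order up to D vanish, i.e. Σ_j a_j j^k = 0 for every integer 0 ≤ k ≤ D. Then (−1)^D Σ_{k,l} a_k a_l |k−l|^{2D+s} < 0; equivalently, writing (a*a)_m = Σ_{k−l=m} a_k a_l, one has (−1)^D Σ_m (a*a)_m |m|^{2D+s} < 0 (in particular this sum is nonzero). -/
/-!
For `2D < α < 2D + 2` let `R(u) = (-1)^(D+1) (cos u - ∑_{j ≤ D} (-1)^j u^(2j) / (2j)!)`. It is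
nonnegative, of order `u^(2D+2)` at `0` and `u^(2D)` at infinity, so by scaling
`|x|^α = c⁻¹ ∫₀^∞ R(x t) t^(-1-α) dt` with `0 < c < ∞`. Summing against `a_k a_l` at `x = k - l`,
the vanishing moments kill the Taylor polynomial (a polynomial of degree `≤ 2D` in `k - l`), and
`∑ a_k a_l cos((k - l) t) = |∑ a_k e^{ikt}|²`. Hence
`(-1)^D ∑ a_k a_l |k - l|^α = -c⁻¹ ∫₀^∞ |∑ a_k e^{ikt}|² t^(-1-α) dt < 0`, the integrand being a
nonzero trigonometric polynomial by orthogonality on `[0, 2π]`. The convolution form is the same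
sum reindexed by `m = k - l`.
-/

open Finset

/-- Convolution of finitely supported sequences: `(a*a')_m = Σ_{k-l=m} a_k a'_l`. -/
noncomputable def seqConv (a a' : ℤ → ℝ) (m : ℤ) : ℝ := ∑ᶠ k : ℤ, a k * a' (k - m)

open Real Set MeasureTheory
open scoped Nat

/-- `trigRem (2 * D) u = (-1) ^ (D + 1) * (cos u - ∑ j ≤ D, (-1) ^ j * u ^ (2 * j) / (2 * j)!)`
and `trigRem (2 * D + 1)` is the corresponding remainder of `sin`; the signs make all of them
nonnegative on `[0, ∞)`. -/
noncomputable def trigRem : ℕ → ℝ → ℝ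
  | 0, u => 1 - cos u
  | 1, u => u - sin u
  | n + 2, u => u ^ (n + 2) / (n + 2)! - trigRem n u

section TaylorRemainder

open Polynomial

lemma hasDerivAt_pow_div_factorial (n : ℕ) (u : ℝ) :
    HasDerivAt (fun u : ℝ => u ^ (n + 1) / (n + 1)!) (u ^ n / n !) u := by
  refine ((hasDerivAt_pow (n + 1) u).div_const ((n + 1)! : ℝ)).congr_deriv ?_
  rw [Nat.factorial_succ, Nat.add_sub_cancel]
  push_cast
  field_simp

lemma hasDerivAt_trigRem : ∀ (n : ℕ) (u : ℝ), HasDerivAt (trigRem (n + 1)) (trigRem n u) u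
  | 0, u => (hasDerivAt_id u).sub (hasDerivAt_sin u) |>.congr_deriv (by simp [trigRem])
  | 1, u => (hasDerivAt_pow_div_factorial 1 u).sub
      ((hasDerivAt_const u (1 : ℝ)).sub (hasDerivAt_cos u)) |>.congr_deriv (by simp [trigRem])
  | n + 2, u => (hasDerivAt_pow_div_factorial (n + 2) u).sub (hasDerivAt_trigRem n u)

lemma trigRem_apply_zero : ∀ n : ℕ, trigRem n 0 = 0
  | 0 => by simp [trigRem]
  | 1 => by simp [trigRem]
  | n + 2 => by simp [trigRem, trigRem_apply_zero n]

lemma continuous_trigRem : ∀ n : ℕ, Continuous (trigRem n)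
  | 0 => (continuous_const.sub continuous_cos : Continuous fun u : ℝ => 1 - cos u)
  | n + 1 => continuous_iff_continuousAt.2 fun u => (hasDerivAt_trigRem n u).continuousAt

lemma trigRem_neg : ∀ (n : ℕ) (u : ℝ), trigRem n (-u) = (-1) ^ n * trigRem n u
  | 0, u => by simp [trigRem]
  | 1, u => by simp [trigRem]; ring
  | n + 2, u => by simp only [trigRem, trigRem_neg n, neg_pow u]; ring

lemma nonneg_of_hasDerivAt_nonneg {f f' : ℝ → ℝ} (hf : ∀ u, HasDerivAt f (f' u) u)
    (h0 : f 0 = 0) (hf' : ∀ u, 0 ≤ u → 0 ≤ f' u) {u : ℝ} (hu : 0 ≤ u) : 0 ≤ f u := by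
  have hmono : MonotoneOn f (Ici 0) :=
    monotoneOn_of_hasDerivWithinAt_nonneg (convex_Ici 0)
      (fun v _ => (hf v).continuousAt.continuousWithinAt)
      (fun v _ => (hf v).hasDerivWithinAt)
      (fun v hv => hf' v (interior_subset hv))
  simpa [h0] using hmono self_mem_Ici hu hu

lemma trigRem_nonneg_and_le : ∀ (n : ℕ) {u : ℝ}, 0 ≤ u →
    0 ≤ trigRem n u ∧ trigRem n u ≤ u ^ (n + 2) / (n + 2)!
  | 0, u, _ => by
    simp only [trigRem, zero_add, Nat.factorial_two, Nat.cast_ofNat]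
    constructor <;> linarith [cos_le_one u, one_sub_sq_div_two_le_cos (x := u)]
  | n + 1, u, hu =>
    ⟨nonneg_of_hasDerivAt_nonneg (hasDerivAt_trigRem n) (trigRem_apply_zero _)
        (fun _ hv => (trigRem_nonneg_and_le n hv).1) hu,
      sub_nonneg.1 <| nonneg_of_hasDerivAt_nonneg
        (fun v => (hasDerivAt_pow_div_factorial (n + 2) v).sub (hasDerivAt_trigRem n v))
        (by simp [trigRem_apply_zero]) (fun _ hv => sub_nonneg.2 (trigRem_nonneg_and_le n hv).2) hu⟩

lemma trigRem_nonneg (n : ℕ) {u : ℝ} (hu : 0 ≤ u) : 0 ≤ trigRem n u :=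
  (trigRem_nonneg_and_le n hu).1

lemma trigRem_le (n : ℕ) {u : ℝ} (hu : 0 ≤ u) : trigRem n u ≤ u ^ (n + 2) / (n + 2)! :=
  (trigRem_nonneg_and_le n hu).2

lemma trigRem_le_three_mul_pow {u : ℝ} (hu : 1 ≤ u) : ∀ n : ℕ, trigRem n u ≤ 3 * u ^ n
  | 0 => by simp only [trigRem]; linarith [neg_one_le_cos u]
  | 1 => by simp only [trigRem]; linarith [neg_one_le_sin u]
  | n + 2 => by
    have h1 : 1 ≤ ((n + 2)! : ℝ) := by exact_mod_cast (n + 2).factorial_pos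
    have h2 : u ^ (n + 2) / (n + 2)! ≤ u ^ (n + 2) := div_le_self (by positivity) h1
    have h3 := trigRem_nonneg n (zero_le_one.trans hu)
    simp only [trigRem]
    nlinarith [pow_nonneg (zero_le_one.trans hu) (n + 2)]

lemma trigRem_one_pos (n : ℕ) : 0 < trigRem n 1 := by
  have h := trigRem_le (n + 2) zero_le_one
  have hlt : ((n + 2)! : ℝ) < (n + 2 + 2)! := by
    exact_mod_cast (Nat.factorial_lt (by omega)).2 (by omega)
  simp only [trigRem, one_pow] at h
  have : 1 / ((n + 2 + 2)! : ℝ) < 1 / (n + 2)! := one_div_lt_one_div_of_lt (by positivity) hlt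
  linarith

lemma exists_trigRem_two_mul_eq (D : ℕ) :
    ∃ p : ℝ[X], p.natDegree ≤ 2 * D ∧
      ∀ u, trigRem (2 * D) u = (-1) ^ (D + 1) * cos u + p.eval u := by
  induction D with
  | zero => exact ⟨C 1, by simp, fun u => by simp [trigRem]; ring⟩
  | succ D ih =>
    obtain ⟨p, hdeg, hp⟩ := ih
    refine ⟨C ((2 * D + 2)! : ℝ)⁻¹ * X ^ (2 * D + 2) - p, ?_, fun u => ?_⟩
    · refine (natDegree_sub_le _ _).trans (max_le ((natDegree_C_mul_X_pow_le _ _).trans ?_) ?_) <;>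
        omega
    · change trigRem (2 * D + 2) u = _
      simp only [trigRem, hp, eval_sub, eval_mul, eval_C, eval_pow, eval_X]
      ring

end TaylorRemainder

section Moments

open Polynomial

variable {ι : Type*} (A : Finset ι) (a x : ι → ℝ)

lemma sum_sum_mul_mul_sub_pow_eq_zero {D j : ℕ} (hmom : ∀ k ≤ D, ∑ i ∈ A, a i * x i ^ k = 0)
    (hj : j ≤ 2 * D) : ∑ i ∈ A, ∑ i' ∈ A, a i * a i' * (x i - x i') ^ j = 0 := by
  have hexpand : ∀ i i', a i * a i' * (x i - x i') ^ j = ∑ m ∈ range (j + 1),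
      (a i * x i ^ m) * (a i' * x i' ^ (j - m)) * ((-1) ^ (j - m) * j.choose m) := by
    intro i i'
    rw [sub_eq_add_neg, add_pow, mul_sum]
    refine sum_congr rfl fun m _ => ?_
    rw [neg_pow]
    ring
  calc ∑ i ∈ A, ∑ i' ∈ A, a i * a i' * (x i - x i') ^ j
      = ∑ m ∈ range (j + 1), (∑ i ∈ A, a i * x i ^ m) * (∑ i' ∈ A, a i' * x i' ^ (j - m)) *
          ((-1) ^ (j - m) * j.choose m) := by
        simp_rw [hexpand, sum_mul_sum, sum_mul]
        exact (sum_congr rfl fun i _ => sum_comm).trans sum_comm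
    _ = 0 := sum_eq_zero fun m hm => by
        rcases le_or_gt m D with h | h
        · rw [hmom m h]; ring
        · rw [hmom (j - m) (by grind)]; ring

lemma sum_sum_mul_mul_eval_sub_mul_eq_zero {D : ℕ} (hmom : ∀ k ≤ D, ∑ i ∈ A, a i * x i ^ k = 0)
    {p : ℝ[X]} (hp : p.natDegree ≤ 2 * D) (t : ℝ) :
    ∑ i ∈ A, ∑ i' ∈ A, a i * a i' * p.eval ((x i - x i') * t) = 0 := by
  calc ∑ i ∈ A, ∑ i' ∈ A, a i * a i' * p.eval ((x i - x i') * t)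
      = ∑ m ∈ range (p.natDegree + 1),
          p.coeff m * t ^ m * ∑ i ∈ A, ∑ i' ∈ A, a i * a i' * (x i - x i') ^ m := by
        simp_rw [eval_eq_sum_range, mul_pow, mul_sum]
        refine ((sum_congr rfl fun i _ => sum_comm).trans sum_comm).trans
          (sum_congr rfl fun m _ => sum_congr rfl fun i _ => sum_congr rfl fun i' _ => by ring)
    _ = 0 := sum_eq_zero fun m hm => by
        rw [sum_sum_mul_mul_sub_pow_eq_zero A a x hmom
          ((Nat.lt_succ_iff.1 (mem_range.1 hm)).trans hp), mul_zero]

lemma sum_sum_mul_mul_trigRem_eq {D : ℕ} (hmom : ∀ k ≤ D, ∑ i ∈ A, a i * x i ^ k = 0) (t : ℝ) :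
    ∑ i ∈ A, ∑ i' ∈ A, a i * a i' * trigRem (2 * D) ((x i - x i') * t) =
      (-1) ^ (D + 1) * ∑ i ∈ A, ∑ i' ∈ A, a i * a i' * cos ((x i - x i') * t) := by
  obtain ⟨p, hp, hrem⟩ := exists_trigRem_two_mul_eq D
  simp_rw [hrem, mul_add, sum_add_distrib, sum_sum_mul_mul_eval_sub_mul_eq_zero A a x hmom hp,
    mul_sum]
  simp only [add_zero]
  refine sum_congr rfl fun i _ => sum_congr rfl fun i' _ => by ring

lemma sum_sum_mul_mul_cos_sub_mul_nonneg (t : ℝ) :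
    0 ≤ ∑ i ∈ A, ∑ i' ∈ A, a i * a i' * cos ((x i - x i') * t) := by
  have h : ∑ i ∈ A, ∑ i' ∈ A, a i * a i' * cos ((x i - x i') * t) =
      (∑ i ∈ A, a i * cos (x i * t)) ^ 2 + (∑ i ∈ A, a i * sin (x i * t)) ^ 2 := by
    simp_rw [sq, sum_mul_sum, ← sum_add_distrib, sub_mul, cos_sub]
    refine sum_congr rfl fun i _ => sum_congr rfl fun i' _ => by ring
  rw [h]
  positivity

end Moments

lemma setIntegral_pos_of_continuousOn {X : Type*} [TopologicalSpace X] [MeasurableSpace X]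
    [OpensMeasurableSpace X] {μ : Measure X} [μ.IsOpenPosMeasure] {U : Set X} (hU : IsOpen U)
    {f : X → ℝ} (hf : IntegrableOn f U μ) (hcont : ContinuousOn f U) (hnn : ∀ x ∈ U, 0 ≤ f x)
    {x₀ : X} (hx₀ : x₀ ∈ U) (hpos : 0 < f x₀) : 0 < ∫ x in U, f x ∂μ := by
  rw [setIntegral_pos_iff_support_of_nonneg_ae (ae_restrict_of_forall_mem hU.measurableSet hnn) hf,
    inter_comm]
  exact (hcont.isOpen_inter_preimage hU isOpen_compl_singleton).measure_pos μ ⟨x₀, hx₀, hpos.ne'⟩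

lemma continuousOn_mul_rpow {f : ℝ → ℝ} (hf : Continuous f) (β : ℝ) :
    ContinuousOn (fun t => f t * t ^ β) (Ioi 0) :=
  hf.continuousOn.mul fun t ht => (continuousAt_rpow_const t β (Or.inl ht.ne')).continuousWithinAt

section Integral

variable {n : ℕ} {α : ℝ}

lemma trigRem_mul_rpow_nonneg {u : ℝ} (hu : 0 < u) : 0 ≤ trigRem n u * u ^ (-1 - α) :=
  mul_nonneg (trigRem_nonneg n hu.le) (rpow_nonneg hu.le _)

lemma trigRem_mul_rpow_le {u : ℝ} (hu : 0 < u) :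
    trigRem n u * u ^ (-1 - α) ≤ u ^ (n + 1 - α) / (n + 2)! := by
  calc trigRem n u * u ^ (-1 - α) ≤ u ^ (n + 2) / (n + 2)! * u ^ (-1 - α) := by
        gcongr; exact trigRem_le n hu.le
    _ = u ^ (n + 1 - α) / (n + 2)! := by
        rw [div_mul_eq_mul_div, ← rpow_natCast, ← rpow_add hu]
        push_cast
        ring_nf

lemma trigRem_mul_rpow_le_of_one_le {u : ℝ} (hu : 1 ≤ u) :
    trigRem n u * u ^ (-1 - α) ≤ 3 * u ^ (n - 1 - α) := by
  calc trigRem n u * u ^ (-1 - α) ≤ 3 * u ^ n * u ^ (-1 - α) := by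
        gcongr; exact trigRem_le_three_mul_pow hu n
    _ = 3 * u ^ (n - 1 - α) := by
        rw [mul_assoc, ← rpow_natCast, ← rpow_add (zero_lt_one.trans_le hu)]
        ring_nf

lemma integrableOn_trigRem_mul_rpow (h₁ : n < α) (h₂ : α < n + 2) :
    IntegrableOn (fun u => trigRem n u * u ^ (-1 - α)) (Ioi 0) := by
  have hcont := continuousOn_mul_rpow (continuous_trigRem n) (-1 - α)
  rw [← Ioc_union_Ioi_eq_Ioi zero_le_one]
  refine IntegrableOn.union ?_ ?_
  · have hdom : IntegrableOn (fun u : ℝ => u ^ (n + 1 - α) / (n + 2)!) (Ioc 0 1) := by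
      refine (intervalIntegral.intervalIntegrable_rpow' (a := 0) (b := 1) ?_).1.div_const _
      linarith
    refine hdom.mono' ((hcont.mono Ioc_subset_Ioi_self).aestronglyMeasurable measurableSet_Ioc) ?_
    refine ae_restrict_of_forall_mem measurableSet_Ioc fun u hu => ?_
    rw [Real.norm_of_nonneg (trigRem_mul_rpow_nonneg hu.1)]
    exact trigRem_mul_rpow_le hu.1
  · have hdom : IntegrableOn (fun u : ℝ => 3 * u ^ (n - 1 - α)) (Ioi 1) :=
      (integrableOn_Ioi_rpow_of_lt (by linarith) zero_lt_one).const_mul 3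
    refine hdom.mono'
      ((hcont.mono (Ioi_subset_Ioi zero_le_one)).aestronglyMeasurable measurableSet_Ioi) ?_
    refine ae_restrict_of_forall_mem measurableSet_Ioi fun u hu => ?_
    rw [Real.norm_of_nonneg (trigRem_mul_rpow_nonneg (zero_lt_one.trans hu))]
    exact trigRem_mul_rpow_le_of_one_le hu.le

noncomputable def trigRemConst (n : ℕ) (α : ℝ) : ℝ := ∫ u in Ioi 0, trigRem n u * u ^ (-1 - α)

lemma trigRemConst_pos (h₁ : n < α) (h₂ : α < n + 2) : 0 < trigRemConst n α :=
  setIntegral_pos_of_continuousOn isOpen_Ioi (integrableOn_trigRem_mul_rpow h₁ h₂)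
    (continuousOn_mul_rpow (continuous_trigRem n) _) (fun _ hu => trigRem_mul_rpow_nonneg hu)
    (mem_Ioi.2 zero_lt_one) (by simpa using trigRem_one_pos n)

lemma trigRem_mul_mul_rpow_eq {b t : ℝ} (hb : 0 < b) (ht : 0 < t) :
    trigRem n (b * t) * t ^ (-1 - α) = b ^ (α + 1) * (trigRem n (b * t) * (b * t) ^ (-1 - α)) := by
  have hb1 : b ^ (α + 1) * b ^ (-1 - α) = 1 := by rw [← rpow_add hb]; ring_nf; exact rpow_zero b
  rw [mul_rpow hb.le ht.le]
  linear_combination (-(trigRem n (b * t) * t ^ (-1 - α))) * hb1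

lemma trigRem_mul_abs (hn : Even n) (x t : ℝ) : trigRem n (x * t) = trigRem n (|x| * t) := by
  rcases abs_choice x with h | h
  · rw [h]
  · rw [h, neg_mul, trigRem_neg, hn.neg_one_pow, one_mul]

lemma integrableOn_trigRem_mul_mul_rpow (hn : Even n) (h₁ : n < α) (h₂ : α < n + 2) (x : ℝ) :
    IntegrableOn (fun t => trigRem n (x * t) * t ^ (-1 - α)) (Ioi 0) := by
  rcases eq_or_ne x 0 with rfl | hx
  · simp [trigRem_apply_zero]
  have hb : 0 < |x| := abs_pos.2 hx
  have hcomp := (integrableOn_Ioi_comp_mul_left_iff (fun u => trigRem n u * u ^ (-1 - α)) 0 hb).2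
    (by rw [mul_zero]; exact integrableOn_trigRem_mul_rpow h₁ h₂)
  refine IntegrableOn.congr_fun (hcomp.const_mul (|x| ^ (α + 1))) (fun t ht => ?_) measurableSet_Ioi
  rw [trigRem_mul_abs hn x, trigRem_mul_mul_rpow_eq hb ht]

lemma integral_trigRem_mul_mul_rpow (hn : Even n) (hα : α ≠ 0) (x : ℝ) :
    ∫ t in Ioi 0, trigRem n (x * t) * t ^ (-1 - α) = |x| ^ α * trigRemConst n α := by
  rcases eq_or_ne x 0 with rfl | hx
  · simp [trigRem_apply_zero, zero_rpow hα]
  have hb : 0 < |x| := abs_pos.2 hx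
  rw [setIntegral_congr_fun measurableSet_Ioi fun t ht => by
      rw [trigRem_mul_abs hn, trigRem_mul_mul_rpow_eq hb ht],
    integral_const_mul,
    integral_comp_mul_left_Ioi (fun u => trigRem n u * u ^ (-1 - α)) 0 hb, mul_zero, smul_eq_mul,
    trigRemConst, ← mul_assoc, rpow_add_one hb.ne', mul_inv_cancel_right₀ hb.ne']

end Integral

section Representation

variable {ι : Type*} (A : Finset ι) (a x : ι → ℝ) {D : ℕ} {α : ℝ}

lemma sum_sum_mul_mul_cos_mul_rpow_eq (hmom : ∀ k ≤ D, ∑ i ∈ A, a i * x i ^ k = 0) (t : ℝ) :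
    (∑ i ∈ A, ∑ i' ∈ A, a i * a i' * cos ((x i - x i') * t)) * t ^ (-1 - α) =
      (-1) ^ (D + 1) * ∑ i ∈ A, ∑ i' ∈ A,
        a i * a i' * (trigRem (2 * D) ((x i - x i') * t) * t ^ (-1 - α)) := by
  simp_rw [← mul_assoc, ← sum_mul, sum_sum_mul_mul_trigRem_eq A a x hmom, ← mul_assoc,
    ← mul_pow, neg_one_mul, neg_neg, one_pow, one_mul]

lemma integrableOn_sum_sum_mul_mul_cos_mul_rpow (hmom : ∀ k ≤ D, ∑ i ∈ A, a i * x i ^ k = 0)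
    (h₁ : 2 * (D : ℝ) < α) (h₂ : α < 2 * D + 2) :
    IntegrableOn (fun t => (∑ i ∈ A, ∑ i' ∈ A, a i * a i' * cos ((x i - x i') * t)) *
      t ^ (-1 - α)) (Ioi 0) := by
  simp_rw [sum_sum_mul_mul_cos_mul_rpow_eq A a x hmom]
  refine (integrable_finsetSum _ fun i _ => integrable_finsetSum _ fun i' _ => ?_).const_mul _
  exact (integrableOn_trigRem_mul_mul_rpow (even_two_mul D) (by push_cast; exact h₁)
    (by push_cast; exact h₂) _).const_mul _

theorem sum_sum_mul_mul_abs_sub_rpow_mul_trigRemConst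
    (hmom : ∀ k ≤ D, ∑ i ∈ A, a i * x i ^ k = 0) (h₁ : 2 * (D : ℝ) < α) (h₂ : α < 2 * D + 2) :
    (∑ i ∈ A, ∑ i' ∈ A, a i * a i' * |x i - x i'| ^ α) * trigRemConst (2 * D) α =
      (-1) ^ (D + 1) * ∫ t in Ioi 0,
        (∑ i ∈ A, ∑ i' ∈ A, a i * a i' * cos ((x i - x i') * t)) * t ^ (-1 - α) := by
  have hα : α ≠ 0 := ((by positivity : (0 : ℝ) ≤ 2 * D).trans_lt h₁).ne'
  have hint : ∀ i i', IntegrableOn (fun t =>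
      a i * a i' * (trigRem (2 * D) ((x i - x i') * t) * t ^ (-1 - α))) (Ioi 0) := fun i i' =>
    (integrableOn_trigRem_mul_mul_rpow (even_two_mul D) (by push_cast; exact h₁)
      (by push_cast; exact h₂) _).const_mul _
  simp_rw [sum_sum_mul_mul_cos_mul_rpow_eq A a x hmom, integral_const_mul]
  rw [integral_finsetSum _ fun i _ => integrable_finsetSum _ fun i' _ => hint i i']
  simp_rw [integral_finsetSum _ fun i' _ => hint _ i', integral_const_mul,
    integral_trigRem_mul_mul_rpow (even_two_mul D) hα, sum_mul, mul_assoc]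
  rw [← mul_assoc, ← mul_pow, neg_one_mul, neg_neg, one_pow, one_mul]

end Representation

section IntegerPoints

lemma integral_cos_int_mul (m : ℤ) :
    ∫ t in 0..2 * π, cos (m * t) = if m = 0 then 2 * π else 0 := by
  split_ifs with hm
  · simp [hm]
  · rw [intervalIntegral.integral_comp_mul_left cos (by exact_mod_cast hm), integral_cos,
      mul_zero, sin_zero, sub_zero, ← mul_assoc, ← Int.cast_two, ← Int.cast_mul, sin_int_mul_pi,
      smul_zero]

lemma integral_sum_sum_mul_mul_cos_int_sub_mul (A : Finset ℤ) (a : ℤ → ℝ) :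
    ∫ t in 0..2 * π, ∑ k ∈ A, ∑ l ∈ A, a k * a l * cos (((k : ℝ) - l) * t) =
      2 * π * ∑ k ∈ A, a k ^ 2 := by
  have hcos : ∀ k l : ℤ, ∫ t in 0..2 * π, a k * a l * cos (((k : ℝ) - l) * t) =
      if k = l then 2 * π * a k ^ 2 else 0 := by
    intro k l
    rw [intervalIntegral.integral_const_mul, ← Int.cast_sub, integral_cos_int_mul]
    simp only [sub_eq_zero]
    split_ifs with h
    · rw [h]; ring
    · ring
  have hint : ∀ k l : ℤ, IntervalIntegrable (fun t => a k * a l * cos (((k : ℝ) - l) * t))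
      volume 0 (2 * π) := fun k l => Continuous.intervalIntegrable (by fun_prop) _ _
  rw [intervalIntegral.integral_finsetSum fun k _ => Continuous.intervalIntegrable
    (continuous_finsetSum A fun l _ => by fun_prop) _ _]
  simp_rw [intervalIntegral.integral_finsetSum fun l _ => hint _ l, hcos, sum_ite_eq, mul_sum]
  exact sum_congr rfl fun k hk => if_pos hk

lemma exists_pos_sum_sum_mul_mul_cos_int_sub_mul {A : Finset ℤ} {a : ℤ → ℝ}
    (hne : ∃ k ∈ A, a k ≠ 0) :
    ∃ t > 0, 0 < ∑ k ∈ A, ∑ l ∈ A, a k * a l * cos (((k : ℝ) - l) * t) := by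
  by_contra! hle
  have hzero : ∫ t in 0..2 * π, ∑ k ∈ A, ∑ l ∈ A, a k * a l * cos (((k : ℝ) - l) * t) = 0 := by
    rw [intervalIntegral.integral_of_le (by positivity)]
    refine (setIntegral_congr_fun measurableSet_Ioc fun t ht => ?_).trans (integral_zero _ _)
    exact le_antisymm (hle t ht.1) (sum_sum_mul_mul_cos_sub_mul_nonneg A a _ t)
  have hpos : 0 < ∑ k ∈ A, a k ^ 2 := by
    obtain ⟨k, hk, hak⟩ := hne
    exact sum_pos' (fun _ _ => sq_nonneg _) ⟨k, hk, by positivity⟩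
  rw [integral_sum_sum_mul_mul_cos_int_sub_mul] at hzero
  have := mul_pos two_pi_pos hpos
  linarith

theorem neg_one_pow_mul_sum_sum_mul_mul_abs_int_sub_rpow_neg {A : Finset ℤ} {a : ℤ → ℝ} {D : ℕ}
    {α : ℝ} (hmom : ∀ k ≤ D, ∑ j ∈ A, a j * (j : ℝ) ^ k = 0) (hne : ∃ k ∈ A, a k ≠ 0)
    (h₁ : 2 * (D : ℝ) < α) (h₂ : α < 2 * D + 2) :
    (-1) ^ D * ∑ k ∈ A, ∑ l ∈ A, a k * a l * |(k : ℝ) - l| ^ α < 0 := by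
  have hJ : 0 < ∫ t in Ioi 0,
      (∑ k ∈ A, ∑ l ∈ A, a k * a l * cos (((k : ℝ) - l) * t)) * t ^ (-1 - α) := by
    obtain ⟨t₀, ht₀, hpos⟩ := exists_pos_sum_sum_mul_mul_cos_int_sub_mul hne
    exact setIntegral_pos_of_continuousOn isOpen_Ioi
      (integrableOn_sum_sum_mul_mul_cos_mul_rpow A a Int.cast hmom h₁ h₂)
      (continuousOn_mul_rpow (by fun_prop) _)
      (fun t ht => mul_nonneg (sum_sum_mul_mul_cos_sub_mul_nonneg A a Int.cast t)
        (rpow_nonneg ht.le _))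
      ht₀ (mul_pos hpos (rpow_pos_of_pos ht₀ _))
  have hc := trigRemConst_pos (n := 2 * D) (by push_cast; exact h₁) (by push_cast; exact h₂)
  have hrepr := sum_sum_mul_mul_abs_sub_rpow_mul_trigRemConst A a Int.cast hmom h₁ h₂
  refine neg_of_mul_neg_left ?_ hc.le
  rw [mul_assoc, hrepr, ← mul_assoc, ← pow_add, Odd.neg_one_pow ⟨D, by ring⟩, neg_one_mul]
  exact neg_neg_of_pos hJ

end IntegerPoints

lemma finsum_finsum_mul_mul_eq_sum_sum {α β : Type*} {a : α → ℝ} {b : β → ℝ} {A : Finset α}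
    {B : Finset β} (ha : Function.support a ⊆ A) (hb : Function.support b ⊆ B) (f : α → β → ℝ) :
    ∑ᶠ k, ∑ᶠ l, a k * b l * f k l = ∑ k ∈ A, ∑ l ∈ B, a k * b l * f k l := by
  rw [finsum_eq_sum_of_support_subset _ fun k hk => ha fun hak => hk (by simp [hak])]
  exact sum_congr rfl fun k _ => finsum_eq_sum_of_support_subset _ fun l hl =>
    hb (right_ne_zero_of_mul (left_ne_zero_of_mul hl))

lemma finsum_seqConv_mul {a b : ℤ → ℝ} (ha : (Function.support a).Finite)
    (hb : (Function.support b).Finite) (w : ℤ → ℝ) :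
    ∑ᶠ m, seqConv a b m * w m = ∑ᶠ k, ∑ᶠ l, a k * b l * w (k - l) := by
  have hA : Function.support a ⊆ ha.toFinset := ha.coe_toFinset.ge
  have hsupp : ∀ m, Function.support (fun k => a k * b (k - m) * w m) ⊆ ha.toFinset :=
    fun m k hk => hA (left_ne_zero_of_mul (left_ne_zero_of_mul hk))
  calc ∑ᶠ m, seqConv a b m * w m = ∑ᶠ m, ∑ k ∈ ha.toFinset, a k * b (k - m) * w m := by
        refine finsum_congr fun m => ?_
        rw [seqConv, finsum_mul, finsum_eq_sum_of_support_subset _ (hsupp m)]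
    _ = ∑ k ∈ ha.toFinset, ∑ᶠ m, a k * b (k - m) * w m :=
        finsum_sum_comm _ _ fun k _ => (hb.preimage sub_right_injective.injOn).subset
          fun m hm => right_ne_zero_of_mul (left_ne_zero_of_mul hm)
    _ = ∑ k ∈ ha.toFinset, ∑ᶠ l, a k * b l * w (k - l) :=
        sum_congr rfl fun k _ => by
          rw [← finsum_comp_equiv (Equiv.subLeft k)]
          simp [Equiv.subLeft_apply, sub_sub_cancel]
    _ = ∑ᶠ k, ∑ᶠ l, a k * b l * w (k - l) :=
        (finsum_eq_sum_of_support_subset _ fun k hk => hA fun hak => hk (by simp [hak])).symm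

/-- if `a` is a nonzero finitely supported real sequence whose moments of
order up to `D` vanish, then `(−1)^D Σ_{k,l} a_k a_l |k−l|^{2D+s} < 0` for `0 < s < 2`;
equivalently `(−1)^D Σ_m (a*a)_m |m|^{2D+s} < 0`. -/
theorem stmt_0 (D : ℕ) (s : ℝ) (hs0 : 0 < s) (hs2 : s < 2)
    (a : ℤ → ℝ) (hfin : (Function.support a).Finite) (hne : a ≠ 0)
    (hmom : ∀ k : ℕ, k ≤ D → ∑ᶠ j : ℤ, a j * (j : ℝ) ^ k = 0) :
    (-1 : ℝ) ^ D * ∑ᶠ k : ℤ, ∑ᶠ l : ℤ, a k * a l * |(k : ℝ) - (l : ℝ)| ^ (2 * (D : ℝ) + s) < 0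
    ∧
    (-1 : ℝ) ^ D * ∑ᶠ m : ℤ, seqConv a a m * |(m : ℝ)| ^ (2 * (D : ℝ) + s) < 0 := by
  set A := hfin.toFinset
  have hA : Function.support a ⊆ A := hfin.coe_toFinset.ge
  have hmomA : ∀ k ≤ D, ∑ j ∈ A, a j * (j : ℝ) ^ k = 0 := fun k hk => by
    rw [← hmom k hk, finsum_eq_sum_of_support_subset _
      ((Function.support_mul_subset_left _ _).trans hA)]
  have hneA : ∃ k ∈ A, a k ≠ 0 := by
    obtain ⟨k, hk⟩ := Function.ne_iff.1 hne
    exact ⟨k, hfin.mem_toFinset.2 hk, hk⟩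
  have key := neg_one_pow_mul_sum_sum_mul_mul_abs_int_sub_rpow_neg hmomA hneA
    (by linarith) (by linarith : 2 * (D : ℝ) + s < 2 * D + 2)
  rw [← finsum_finsum_mul_mul_eq_sum_sum hA hA] at key
  refine ⟨key, ?_⟩
  rw [finsum_seqConv_mul hfin hfin]
  push_cast
  exact key
end

section
/- For every real p > 0 and all reals u, v ≥ 0, ∫_0^u (∫_0^v |x−y|^p dy) dx = (u^{p+2} + v^{p+2} − |u−v|^{p+2}) / ((p+1)(p+2)). -/
/-!
The function `t ↦ |t| ^ p` has the antiderivative `t ↦ t * |t| ^ p / (p + 1)`, and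
`t ↦ t * |t| ^ p` has the antiderivative `t ↦ |t| ^ (p + 2) / (p + 2)`. Integrating twice by the
fundamental theorem of calculus, the double integral over `[0, u] × [0, v]` is the second
difference `G u - G (u - v) - G 0 + G (-v)` of the even function
`G t = |t| ^ (p + 2) / ((p + 1) * (p + 2))`.
-/

variable {p : ℝ}

theorem hasDerivAt_mul_abs_rpow (hp : 0 ≤ p) (t : ℝ) :
    HasDerivAt (fun s : ℝ => s * |s| ^ p) ((p + 1) * |t| ^ p) t := by
  rcases eq_or_ne t 0 with rfl | ht
  · rw [hasDerivAt_iff_tendsto_slope]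
    have hcont : Continuous fun s : ℝ => |s| ^ p := continuous_abs.rpow_const fun _ => .inr hp
    refine ((hcont.tendsto 0).mono_left nhdsWithin_le_nhds).congr' ?_ |>.trans_eq ?_
    · filter_upwards [self_mem_nhdsWithin] with s (hs : s ≠ 0)
      rw [slope_def_field, zero_mul, sub_zero, sub_zero, mul_div_cancel_left₀ _ hs]
    · rcases hp.eq_or_lt with rfl | hp
      · simp
      · simp [Real.zero_rpow hp.ne']
  · have hsign : t * (SignType.sign t : ℝ) = |t| := by
      rcases ht.lt_or_gt with h | h <;> simp [h, abs_of_neg, abs_of_pos]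
    refine ((hasDerivAt_id' t).mul ((hasDerivAt_abs ht).rpow_const (p := p)
      (.inl (abs_ne_zero.2 ht)))).congr_deriv ?_
    rw [Real.rpow_sub_one (abs_ne_zero.2 ht)]
    field_simp
    linear_combination p * hsign

theorem integral_abs_rpow (hp : 0 ≤ p) (a b : ℝ) :
    ∫ t in a..b, |t| ^ p = (b * |b| ^ p - a * |a| ^ p) / (p + 1) := by
  have hp1 : p + 1 ≠ 0 := by positivity
  rw [intervalIntegral.integral_eq_sub_of_hasDerivAt
    (f := fun s => s * |s| ^ p / (p + 1))
    (fun t _ => (hasDerivAt_mul_abs_rpow hp t).div_const (p + 1) |>.congr_deriv (by field_simp))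
    ((continuous_abs.rpow_const fun _ => .inr hp).intervalIntegrable a b), sub_div]

theorem integral_mul_abs_rpow (hp : 0 ≤ p) (a b : ℝ) :
    ∫ t in a..b, t * |t| ^ p = (|b| ^ (p + 2) - |a| ^ (p + 2)) / (p + 2) := by
  have hp2 : p + 2 ≠ 0 := by positivity
  have hderiv (t : ℝ) : HasDerivAt (fun s => |s| ^ (p + 2) / (p + 2)) (t * |t| ^ p) t :=
    (hasDerivAt_abs_rpow t (by linarith)).div_const (p + 2) |>.congr_deriv (by
      rw [add_sub_cancel_right]; field_simp)
  have hcont : Continuous fun t : ℝ => t * |t| ^ p :=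
    continuous_id.mul (continuous_abs.rpow_const fun _ => .inr hp)
  rw [intervalIntegral.integral_eq_sub_of_hasDerivAt (fun t _ => hderiv t)
    (hcont.intervalIntegrable a b), sub_div]

theorem integral_integral_abs_sub_rpow (hp : 0 ≤ p) (u v : ℝ) :
    ∫ x in (0:ℝ)..u, ∫ y in (0:ℝ)..v, |x - y| ^ p =
      (|u| ^ (p + 2) + |v| ^ (p + 2) - |u - v| ^ (p + 2)) / ((p + 1) * (p + 2)) := by
  have inner (x : ℝ) :
      ∫ y in (0:ℝ)..v, |x - y| ^ p = (x * |x| ^ p - (x - v) * |x - v| ^ p) / (p + 1) := by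
    rw [intervalIntegral.integral_comp_sub_left (fun t => |t| ^ p), integral_abs_rpow hp,
      sub_zero]
  have hcont : Continuous fun t : ℝ => t * |t| ^ p :=
    continuous_id.mul (continuous_abs.rpow_const fun _ => .inr hp)
  have hshift : Continuous fun x : ℝ => (x - v) * |x - v| ^ p :=
    hcont.comp (continuous_sub_right v)
  simp_rw [inner]
  rw [intervalIntegral.integral_div, intervalIntegral.integral_sub
    (hcont.intervalIntegrable 0 u) (hshift.intervalIntegrable 0 u),
    intervalIntegral.integral_comp_sub_right (fun t => t * |t| ^ p), integral_mul_abs_rpow hp,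
    integral_mul_abs_rpow hp, zero_sub, abs_neg, abs_zero, Real.zero_rpow (by positivity)]
  field_simp
  ring

/-- for `p > 0` and `u, v ≥ 0`,
`∫_0^u (∫_0^v |x−y|^p dy) dx = (u^{p+2} + v^{p+2} − |u−v|^{p+2}) / ((p+1)(p+2))`. -/
theorem stmt_1 (p : ℝ) (hp : 0 < p) (u v : ℝ) (hu : 0 ≤ u) (hv : 0 ≤ v) :
    ∫ x in (0:ℝ)..u, (∫ y in (0:ℝ)..v, |x - y| ^ p) =
      (u ^ (p + 2) + v ^ (p + 2) - |u - v| ^ (p + 2)) / ((p + 1) * (p + 2)) := by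
  rw [integral_integral_abs_sub_rpow hp.le, abs_of_nonneg hu, abs_of_nonneg hv]
end

section
/- Let L ≥ 1 and let b be a real sequence supported in {−L+1, …, L−1} such that Σ_j b_j j^k = 0 for every integer 0 ≤ k < q, where q ≥ 1. Let p > 0 be a real number with p < q. Then there exists a constant K > 0 such that for every integer i with |i| ≥ 2L, | Σ_j b_j |i+j|^p | ≤ K |i|^{p−q}. -/
/-!
For `|i| ≥ 2L` every `j` in the support of `b` satisfies `|j / i| ≤ 1/2`, and
`|i + j|^p = |i|^p (1 + j/i)^p`. Taylor's theorem approximates `(1 + x)^p` on `[-1/2, 1/2]` by a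
polynomial of degree `< q` up to an error `O(|x|^q)`. The vanishing moments of `b` annihilate the
polynomial part, and the error terms contribute `O(|i|^p |i|^{-q})`.
-/

open Set Finset
open scoped Nat

theorem exists_abs_sub_taylor_le {f : ℝ → ℝ} {s : Set ℝ} {r : ℝ} {n : ℕ} (hs : IsOpen s)
    (hrs : Icc (-r) r ⊆ s) (hf : ContDiffOn ℝ (n + 1) f s) :
    ∃ C, 0 ≤ C ∧ ∀ x ∈ Icc (-r) r,
      |f x - ∑ k ∈ range (n + 1), iteratedDeriv k f 0 / k ! * x ^ k| ≤ C * |x| ^ (n + 1) := by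
  have hcont : ContinuousOn (iteratedDeriv (n + 1) f) s :=
    (hf.continuousOn_iteratedDerivWithin le_rfl hs.uniqueDiffOn).congr
      (iteratedDerivWithin_of_isOpen hs).symm
  obtain ⟨M, hM⟩ := isCompact_Icc.exists_bound_of_continuousOn (hcont.mono hrs)
  refine ⟨max M 0 / (n + 1)!, by positivity, fun x hx => ?_⟩
  rcases eq_or_ne x 0 with rfl | hx0
  · simp [Finset.sum_range_succ']
  have hsub : uIcc 0 x ⊆ Icc (-r) r :=
    uIcc_subset_Icc ⟨by linarith [hx.1, hx.2], by linarith [hx.1, hx.2]⟩ hx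
  obtain ⟨ξ, hξ, hrem⟩ :=
    taylor_mean_remainder_lagrange_iteratedDeriv hx0.symm (hf.mono (hsub.trans hrs))
  have htaylor : taylorWithinEval f n (uIcc 0 x) 0 x =
      ∑ k ∈ range (n + 1), iteratedDeriv k f 0 / k ! * x ^ k := by
    rw [taylor_within_apply]
    refine sum_congr rfl fun k hk => ?_
    have hf0 : ContDiffAt ℝ k f 0 :=
      (hf.contDiffAt (hs.mem_nhds (hrs (hsub left_mem_uIcc)))).of_le
        (by exact_mod_cast (mem_range.mp hk).le)
    rw [iteratedDerivWithin_eq_iteratedDeriv (uniqueDiffOn_uIcc hx0.symm) hf0 left_mem_uIcc,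
      smul_eq_mul, sub_zero]
    ring
  rw [← htaylor, hrem, abs_div, abs_mul, abs_pow, Nat.abs_cast, sub_zero, div_mul_eq_mul_div]
  gcongr
  exact (hM ξ (hsub (Ioo_subset_Icc_self hξ))).trans (le_max_left _ _)

theorem exists_abs_one_add_rpow_sub_poly_le (p : ℝ) (n : ℕ) :
    ∃ a : ℕ → ℝ, ∃ C, 0 ≤ C ∧ ∀ x : ℝ, |x| ≤ 1 / 2 →
      |(1 + x) ^ p - ∑ k ∈ range (n + 1), a k * x ^ k| ≤ C * |x| ^ (n + 1) := by
  have hf : ContDiffOn ℝ (n + 1) (fun x : ℝ => (1 + x) ^ p) (Ioi (-1)) :=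
    (contDiffOn_const.add contDiffOn_id).rpow_const_of_ne fun x hx => by
      rw [Set.mem_Ioi] at hx; simp only [id]; linarith
  obtain ⟨C, hC0, hC⟩ := exists_abs_sub_taylor_le (r := 1 / 2) isOpen_Ioi
    (fun x hx => by rw [Set.mem_Ioi]; linarith [hx.1]) hf
  exact ⟨_, C, hC0, fun x hx => hC x (abs_le.mp hx)⟩

theorem sum_mul_sum_pow_eq_zero {ι : Type*} {F : Finset ι} {b z : ι → ℝ} {q : ℕ}
    (hmom : ∀ k < q, ∑ j ∈ F, b j * z j ^ k = 0) (c : ℕ → ℝ) :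
    ∑ j ∈ F, b j * ∑ k ∈ range q, c k * z j ^ k = 0 := by
  simp_rw [mul_sum]
  rw [sum_comm]
  refine sum_eq_zero fun k hk => ?_
  simp_rw [mul_left_comm (b _), ← mul_sum, hmom k (mem_range.mp hk), mul_zero]

theorem abs_add_rpow_eq_mul {y z : ℝ} (p : ℝ) (hy : y ≠ 0) (hz : |z| ≤ |y|) :
    |y + z| ^ p = |y| ^ p * (1 + z / y) ^ p := by
  have h1 : 0 ≤ 1 + z / y := by
    have := neg_le_of_abs_le ((abs_div z y).trans_le ((div_le_one (abs_pos.mpr hy)).mpr hz))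
    linarith
  rw [show y + z = y * (1 + z / y) by field_simp, abs_mul, abs_of_nonneg h1,
    Real.mul_rpow (abs_nonneg y) h1]

theorem abs_sum_mul_abs_add_rpow_le {ι : Type*} {F : Finset ι} {b z : ι → ℝ} {q : ℕ}
    (hmom : ∀ k < q, ∑ j ∈ F, b j * z j ^ k = 0) {p C : ℝ} {a : ℕ → ℝ}
    (hC : ∀ x : ℝ, |x| ≤ 1 / 2 →
      |(1 + x) ^ p - ∑ k ∈ range q, a k * x ^ k| ≤ C * |x| ^ q)
    {y : ℝ} (hy : ∀ j ∈ F, 2 * |z j| < |y|) :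
    |∑ j ∈ F, b j * |y + z j| ^ p| ≤
      C * (∑ j ∈ F, |b j| * |z j| ^ q) * |y| ^ (p - q) := by
  have hy0 : ∀ j ∈ F, y ≠ 0 := fun j hj =>
    abs_pos.mp (by linarith [hy j hj, abs_nonneg (z j)])
  have hsmall : ∀ j ∈ F, |z j / y| ≤ 1 / 2 := fun j hj => by
    rw [abs_div, div_le_iff₀ (abs_pos.mpr (hy0 j hj))]; linarith [hy j hj]
  have hcancel := sum_mul_sum_pow_eq_zero hmom fun k => |y| ^ p * (a k / y ^ k)
  calc |∑ j ∈ F, b j * |y + z j| ^ p|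
      = |∑ j ∈ F, |y| ^ p *
          (b j * ((1 + z j / y) ^ p - ∑ k ∈ range q, a k * (z j / y) ^ k))| := by
        rw [← sub_zero (∑ j ∈ F, _), ← hcancel, ← sum_sub_distrib]
        congr 1
        refine sum_congr rfl fun j hj => ?_
        rw [abs_add_rpow_eq_mul p (hy0 j hj) (by linarith [hy j hj, abs_nonneg (z j)])]
        simp only [mul_sub, mul_sum, div_pow]
        congr 1
        · ring
        · exact sum_congr rfl fun k _ => by ring
    _ ≤ ∑ j ∈ F, |y| ^ p * (|b j| * (C * |z j / y| ^ q)) := by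
        refine (abs_sum_le_sum_abs _ _).trans (sum_le_sum fun j hj => ?_)
        rw [abs_mul, abs_mul, abs_of_nonneg (by positivity)]
        gcongr
        exact hC _ (hsmall j hj)
    _ = C * (∑ j ∈ F, |b j| * |z j| ^ q) * |y| ^ (p - q) := by
        rw [mul_sum, sum_mul]
        refine sum_congr rfl fun j hj => ?_
        have : |y| ≠ 0 := abs_ne_zero.mpr (hy0 j hj)
        rw [abs_div, div_pow, Real.rpow_sub_natCast this]
        field_simp

theorem stmt_16_general (L : ℕ) (b : ℤ → ℝ)
    (hsupp : ∀ j : ℤ, b j ≠ 0 → -((L : ℤ) - 1) ≤ j ∧ j ≤ (L : ℤ) - 1)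
    (q : ℕ) (hq : 1 ≤ q)
    (hmom : ∀ k : ℕ, k < q → ∑ᶠ j : ℤ, b j * (j : ℝ) ^ k = 0)
    (p : ℝ) :
    ∃ K : ℝ, 0 < K ∧ ∀ i : ℤ, 2 * (L : ℤ) ≤ |i| →
      |∑ᶠ j : ℤ, b j * |(i : ℝ) + (j : ℝ)| ^ p| ≤ K * |(i : ℝ)| ^ (p - (q : ℝ)) := by
  set F := Finset.Icc (-((L : ℤ) - 1)) ((L : ℤ) - 1)
  have hsupport (c : ℤ → ℝ) : (Function.support fun j => b j * c j) ⊆ F := fun j hj => by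
    simpa [F] using hsupp j (left_ne_zero_of_mul hj)
  have hmomF : ∀ k < q, ∑ j ∈ F, b j * (j : ℝ) ^ k = 0 := fun k hk => by
    rw [← finsum_eq_sum_of_support_subset _ (hsupport fun j => (j : ℝ) ^ k)]
    exact hmom k hk
  obtain ⟨n, rfl⟩ := Nat.exists_eq_add_of_le' hq
  obtain ⟨a, C, hC0, hC⟩ := exists_abs_one_add_rpow_sub_poly_le p n
  refine ⟨C * ∑ j ∈ F, |b j| * |(j : ℝ)| ^ (n + 1) + 1, by positivity, fun i hi => ?_⟩
  rw [finsum_eq_sum_of_support_subset _ (hsupport fun j => |(i : ℝ) + j| ^ p)]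
  have hfar : ∀ j ∈ F, 2 * |(j : ℝ)| < |(i : ℝ)| := fun j hj => by
    have : |j| ≤ (L : ℤ) - 1 := abs_le.mpr (by simpa [F] using hj)
    exact_mod_cast (show 2 * |j| < |i| by omega)
  refine (abs_sum_mul_abs_add_rpow_le hmomF hC hfar).trans ?_
  gcongr
  linarith

/-- if `b` is supported in `{−L+1,…,L−1}` with vanishing moments of order
`< q` (`q ≥ 1`), and `0 < p < q` is real, then there is `K > 0` with
`|Σ_j b_j |i+j|^p| ≤ K |i|^{p−q}` for every integer `i` with `|i| ≥ 2L`. -/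
theorem stmt_16 (L : ℕ) (hL : 1 ≤ L) (b : ℤ → ℝ)
    (hsupp : ∀ j : ℤ, b j ≠ 0 → -((L : ℤ) - 1) ≤ j ∧ j ≤ (L : ℤ) - 1)
    (q : ℕ) (hq : 1 ≤ q)
    (hmom : ∀ k : ℕ, k < q → ∑ᶠ j : ℤ, b j * (j : ℝ) ^ k = 0)
    (p : ℝ) (hp0 : 0 < p) (hpq : p < q) :
    ∃ K : ℝ, 0 < K ∧ ∀ i : ℤ, 2 * (L : ℤ) ≤ |i| →
      |∑ᶠ j : ℤ, b j * |(i : ℝ) + (j : ℝ)| ^ p| ≤ K * |(i : ℝ)| ^ (p - (q : ℝ)) :=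
  stmt_16_general L b hsupp q hq hmom p
end

section
/- Let a be a finitely supported real sequence supported in {0,…,L−1} with Σ_j a_j j^k = 0 for all integers 0 ≤ k < M (M ≥ 1), let δ > 0, let T > 0, and let f : ℝ → ℝ be M times continuously differentiable on [0,T]. Then for every integer i ≥ 0 with (i+L−1)δ ≤ T, | Σ_{j=0}^{L−1} a_j f((i+j)δ) | ≤ ( Σ_{j=0}^{L−1} |a_j| j^M / M! ) · δ^M · sup_{t ∈ [iδ, (i+L−1)δ]} |f^{(M)}(t)|. -/
/-! The moment conditions say exactly that `Σ_j a_j p(iδ + jδ) = 0` for every polynomial `p` of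
degree `< M`, in particular for the Taylor polynomial of `f` of order `M` at `iδ`. Subtracting it
leaves `Σ_j a_j R_j`, where by Lagrange's form of the remainder
`|R_j| ≤ sup |f^{(M)}| (jδ)^M / M!`. -/

open Set
open scoped Nat

section Subset

variable {E : Type*} [NormedAddCommGroup E] [NormedSpace ℝ E]

theorem iteratedDerivWithin_eq_of_subset {f : ℝ → E} {s t : Set ℝ} {n m : ℕ} {x : ℝ}
    (hst : s ⊆ t) (hs : UniqueDiffOn ℝ s) (ht : UniqueDiffOn ℝ t) (hf : ContDiffOn ℝ n f t)
    (hm : m ≤ n) (hx : x ∈ s) :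
    iteratedDerivWithin m f s x = iteratedDerivWithin m f t x := by
  simp only [iteratedDerivWithin_eq_iteratedFDerivWithin,
    iteratedFDerivWithin_subset hst hs ht (hf.of_le (by exact_mod_cast hm)) hx]

theorem taylorWithinEval_eq_of_subset {f : ℝ → E} {s t : Set ℝ} {n : ℕ} {x₀ : ℝ}
    (hst : s ⊆ t) (hs : UniqueDiffOn ℝ s) (ht : UniqueDiffOn ℝ t) (hf : ContDiffOn ℝ n f t)
    (hx₀ : x₀ ∈ s) (x : ℝ) :
    taylorWithinEval f n s x₀ x = taylorWithinEval f n t x₀ x := by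
  simp only [taylor_within_apply]
  refine Finset.sum_congr rfl fun k hk => ?_
  rw [iteratedDerivWithin_eq_of_subset hst hs ht hf
    (Nat.lt_succ_iff.1 (Finset.mem_range.1 hk)) hx₀]

end Subset

theorem abs_sub_taylor_sum_le {f : ℝ → ℝ} {a b x₀ x C : ℝ} {M : ℕ} (hab : a < b)
    (hf : ContDiffOn ℝ M f (Icc a b)) (hx : Icc x₀ x ⊆ Icc a b) (hx₀x : x₀ ≤ x)
    (hC : ∀ y ∈ Icc x₀ x, |iteratedDerivWithin M f (Icc a b) y| ≤ C) :
    |f x - ∑ k ∈ Finset.range M,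
        ((k ! : ℝ)⁻¹ * (x - x₀) ^ k) * iteratedDerivWithin k f (Icc a b) x₀|
      ≤ C * (x - x₀) ^ M / M ! := by
  cases M with
  | zero => simpa using hC x ⟨hx₀x, le_rfl⟩
  | succ n =>
    have hsum : ∑ k ∈ Finset.range (n + 1),
        ((k ! : ℝ)⁻¹ * (x - x₀) ^ k) * iteratedDerivWithin k f (Icc a b) x₀
          = taylorWithinEval f n (Icc a b) x₀ x := by
      simp only [taylor_within_apply, smul_eq_mul]
    rw [hsum]
    rcases hx₀x.eq_or_lt with rfl | hlt
    · simp [taylorWithinEval_self]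
    have hsub : uIcc x₀ x ⊆ Icc a b := by rwa [uIcc_of_le hx₀x]
    have hu : UniqueDiffOn ℝ (uIcc x₀ x) := by
      rw [uIcc_of_le hx₀x]; exact uniqueDiffOn_Icc hlt
    have hfn : ContDiffOn ℝ n f (Icc a b) := hf.of_le (by exact_mod_cast n.le_succ)
    have hf' : DifferentiableOn ℝ (iteratedDerivWithin n f (uIcc x₀ x)) (uIoo x₀ x) :=
      ((hf.mono hsub).differentiableOn_iteratedDerivWithin (by exact_mod_cast n.lt_succ_self)
        hu).mono uIoo_subset_uIcc_self
    obtain ⟨x', hx', hlagrange⟩ := taylor_mean_remainder_lagrange hlt.ne (hfn.mono hsub) hf'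
    have hx'mem : x' ∈ uIcc x₀ x := uIoo_subset_uIcc_self hx'
    rw [taylorWithinEval_eq_of_subset hsub hu (uniqueDiffOn_Icc hab) hfn left_mem_uIcc,
      iteratedDerivWithin_eq_of_subset hsub hu (uniqueDiffOn_Icc hab) hf le_rfl hx'mem]
      at hlagrange
    rw [hlagrange, abs_div, abs_mul, abs_of_nonneg (pow_nonneg (sub_nonneg.2 hx₀x) _),
      abs_of_pos (by positivity : (0 : ℝ) < (n + 1)!)]
    gcongr
    exact hC x' (by rwa [uIcc_of_le hx₀x] at hx'mem)

theorem sum_mul_sum_pow_eq_zero_of_moments {L M : ℕ} {a : ℕ → ℝ}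
    (hmom : ∀ k : ℕ, k < M → ∑ j ∈ Finset.range L, a j * (j : ℝ) ^ k = 0)
    (c : ℕ → ℝ) :
    ∑ j ∈ Finset.range L, a j * ∑ k ∈ Finset.range M, c k * (j : ℝ) ^ k = 0 := by
  simp_rw [Finset.mul_sum]
  rw [Finset.sum_comm]
  refine Finset.sum_eq_zero fun k hk => ?_
  calc ∑ j ∈ Finset.range L, a j * (c k * (j : ℝ) ^ k)
      = c k * ∑ j ∈ Finset.range L, a j * (j : ℝ) ^ k := by
        rw [Finset.mul_sum]
        exact Finset.sum_congr rfl fun j _ => by ring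
    _ = 0 := by rw [hmom k (Finset.mem_range.1 hk), mul_zero]

theorem stmt_17_general (L M : ℕ) (a : ℕ → ℝ)
    (hmom : ∀ k : ℕ, k < M → ∑ j ∈ Finset.range L, a j * (j : ℝ) ^ k = 0)
    (δ T : ℝ) (hδ : 0 < δ) (hT : 0 < T)
    (f : ℝ → ℝ) (hf : ContDiffOn ℝ (M : ℕ∞) f (Set.Icc 0 T)) :
    ∀ i : ℕ, ((i : ℝ) + (L : ℝ) - 1) * δ ≤ T →
      |∑ j ∈ Finset.range L, a j * f (((i : ℝ) + (j : ℝ)) * δ)|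
        ≤ (∑ j ∈ Finset.range L, |a j| * (j : ℝ) ^ M / (Nat.factorial M : ℝ)) * δ ^ M *
          sSup ((fun t => |iteratedDerivWithin M f (Set.Icc 0 T) t|) ''
            Set.Icc ((i : ℝ) * δ) (((i : ℝ) + (L : ℝ) - 1) * δ)) := by
  intro i hi
  set x₀ : ℝ := i * δ
  set C := sSup ((fun t => |iteratedDerivWithin M f (Icc 0 T) t|) '' Icc x₀ ((i + L - 1) * δ))
  set P : ℝ → ℝ := fun x => ∑ k ∈ Finset.range M,
    ((k ! : ℝ)⁻¹ * (x - x₀) ^ k) * iteratedDerivWithin k f (Icc 0 T) x₀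
  have hstep (j : ℕ) : (i + j) * δ - x₀ = j * δ := by ring
  have hP : ∑ j ∈ Finset.range L, a j * P ((i + j) * δ) = 0 := by
    rw [← sum_mul_sum_pow_eq_zero_of_moments hmom
      fun k => (k ! : ℝ)⁻¹ * δ ^ k * iteratedDerivWithin k f (Icc 0 T) x₀]
    refine Finset.sum_congr rfl fun j _ => congrArg _ (Finset.sum_congr rfl fun k _ => ?_)
    rw [hstep]
    ring
  have hcont : ContinuousOn (fun t => |iteratedDerivWithin M f (Icc 0 T) t|)
      (Icc x₀ ((i + L - 1) * δ)) :=
    ((hf.continuousOn_iteratedDerivWithin le_rfl (uniqueDiffOn_Icc hT)).mono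
      (Icc_subset_Icc (by positivity) hi)).abs
  have hrem : ∀ j ∈ Finset.range L,
      |f ((i + j) * δ) - P ((i + j) * δ)| ≤ C * (j * δ) ^ M / M ! := by
    intro j hj
    have hjL : (j : ℝ) + 1 ≤ L := by exact_mod_cast Finset.mem_range.1 hj
    have hx₀j : x₀ ≤ (i + j) * δ := by nlinarith
    have hjb : (i + j) * δ ≤ (i + L - 1) * δ := by nlinarith
    rw [← hstep j]
    exact abs_sub_taylor_sum_le hT hf (Icc_subset_Icc (by positivity) (hjb.trans hi)) hx₀j
      fun y hy => hcont.le_sSup_image_Icc ⟨hy.1, hy.2.trans hjb⟩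
  calc |∑ j ∈ Finset.range L, a j * f ((i + j) * δ)|
      = |∑ j ∈ Finset.range L, a j * (f ((i + j) * δ) - P ((i + j) * δ))| := by
        simp only [mul_sub, Finset.sum_sub_distrib, hP, sub_zero]
    _ ≤ ∑ j ∈ Finset.range L, |a j| * (C * (j * δ) ^ M / M !) := by
        refine (Finset.abs_sum_le_sum_abs _ _).trans (Finset.sum_le_sum fun j hj => ?_)
        rw [abs_mul]
        exact mul_le_mul_of_nonneg_left (hrem j hj) (abs_nonneg _)
    _ = (∑ j ∈ Finset.range L, |a j| * (j : ℝ) ^ M / M !) * δ ^ M * C := by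
        rw [Finset.sum_mul, Finset.sum_mul]
        exact Finset.sum_congr rfl fun j _ => by ring

/-- Taylor–Lagrange bound on the discrete `a`-difference of a drift `f`:
if `a` is supported in `{0,…,L−1}` with vanishing moments of order `< M`, `δ > 0`,
and `f` is `M` times continuously differentiable on `[0,T]`, then for `i ≥ 0` with
`(i+L−1)δ ≤ T`,
`|Σ_j a_j f((i+j)δ)| ≤ (Σ_j |a_j| j^M / M!) δ^M sup_{t∈[iδ,(i+L−1)δ]} |f^{(M)}(t)|`. -/
theorem stmt_17 (L M : ℕ) (hL : 1 ≤ L) (hM : 1 ≤ M) (a : ℕ → ℝ)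
    (hmom : ∀ k : ℕ, k < M → ∑ j ∈ Finset.range L, a j * (j : ℝ) ^ k = 0)
    (δ T : ℝ) (hδ : 0 < δ) (hT : 0 < T)
    (f : ℝ → ℝ) (hf : ContDiffOn ℝ (M : ℕ∞) f (Set.Icc 0 T)) :
    ∀ i : ℕ, ((i : ℝ) + (L : ℝ) - 1) * δ ≤ T →
      |∑ j ∈ Finset.range L, a j * f (((i : ℝ) + (j : ℝ)) * δ)|
        ≤ (∑ j ∈ Finset.range L, |a j| * (j : ℝ) ^ M / (Nat.factorial M : ℝ)) * δ ^ M *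
          sSup ((fun t => |iteratedDerivWithin M f (Set.Icc 0 T) t|) ''
            Set.Icc ((i : ℝ) * δ) (((i : ℝ) + (L : ℝ) - 1) * δ)) :=
  stmt_17_general L M a hmom δ T hδ hT f hf
end
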